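/- Let (X,d) be a compact metric space and f_{0,∞} = {f_n}_{n=0}^∞ a sequence of continuous self-maps of X. If (X, f_{0,∞}) has the specification property, then so does the induced system (𝓜(X), f̂_{0,∞}). -/

import Mathlib

open MeasureTheory Filter

/-- `nacomp f n = f_{n-1} ∘ ⋯ ∘ f_0` (with `nacomp f 0 = id`): the time-`n` map of the
non-autonomous system `(X, f_{0,∞})`. -/
def nacomp {Y : Type*} (f : ℕ → Y → Y) : ℕ → Y → Y
  | 0 => id
  | n + 1 => f n ∘ nacomp f n

/-- The induced pushforward map `f̂` on the space `𝓜(X)` of Borel probability measures,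
equipped with the Lévy–Prokhorov metric. -/
noncomputable def inducedMap {X : Type*} [MetricSpace X] [MeasurableSpace X] [BorelSpace X]
    (f : X → X) (hf : Continuous f) :
    LevyProkhorov (ProbabilityMeasure X) → LevyProkhorov (ProbabilityMeasure X) :=
  fun μ => (LevyProkhorov.toMeasureEquiv (α := ProbabilityMeasure X)).symm
    (((LevyProkhorov.toMeasureEquiv (α := ProbabilityMeasure X)) μ).map hf.measurable.aemeasurable)

/-- The specification property of the non-autonomous system given by the maps `f n`:
for every `ε > 0` there is `M ≥ 1` such that for any `k ≥ 2` points `y 0, …, y (k-1)` and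
any non-negative integers `a 0 ≤ b 0 < a 1 ≤ b 1 < ⋯ < a (k-1) ≤ b (k-1)` with
`a (i+1) - b i ≥ M`, there is `z` tracing each `y i` within `ε` on the time window
`[a i, b i]`. -/
def NASpecification {Y : Type*} [PseudoMetricSpace Y] (f : ℕ → Y → Y) : Prop :=
  ∀ ε : ℝ, 0 < ε → ∃ M : ℕ, 1 ≤ M ∧ ∀ k, 2 ≤ k → ∀ y : ℕ → Y, ∀ a b : ℕ → ℕ,
    (∀ i, i < k → a i ≤ b i) → (∀ i, i + 1 < k → b i + M ≤ a (i + 1)) →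
    ∃ z : Y, ∀ i, i < k → ∀ n, a i ≤ n → n ≤ b i →
      dist (nacomp f n z) (nacomp f n (y i)) ≤ ε

/-!
Specification upstairs is obtained by lifting specification downstairs through a product
coupling. Given `μ₀, …, μ_{k-1}`, apply the specification property of `X` to every tuple
`(x₀, …, x_{k-1})` and push the product measure `μ₀ ⊗ ⋯ ⊗ μ_{k-1}` forward along the resulting
tracing map `W`. Under this coupling `W x` shadows `x i` on the `i`-th window, so the images of
the law of `W` and of `μ i` under the time-`n` map are close in the Lévy–Prokhorov metric. The
only obstacle is measurability of `W`: it is made measurable by first rounding each `x i` to a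
countable net, at the cost of an extra error that is uniform on the finitely many relevant
times by compactness.
-/

open TopologicalSpace

lemma continuous_nacomp {X : Type*} [TopologicalSpace X] {f : ℕ → X → X}
    (hf : ∀ n, Continuous (f n)) : ∀ n, Continuous (nacomp f n)
  | 0 => continuous_id
  | n + 1 => (hf n).comp (continuous_nacomp hf n)

lemma levyProkhorovEDist_map_le_of_dist_le {α X : Type*} [MeasurableSpace α]
    [PseudoMetricSpace X] [MeasurableSpace X] [OpensMeasurableSpace X]
    (m : Measure α) {g g' : α → X} (hg : Measurable g) (hg' : Measurable g')
    {r : ℝ} (hr : 0 ≤ r) (hgg' : ∀ t, dist (g t) (g' t) ≤ r) :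
    levyProkhorovEDist (m.map g) (m.map g') ≤ ENNReal.ofReal r := by
  refine levyProkhorovEDist_le_of_forall _ _ _ fun ε B hε hεtop hB => ?_
  have hrε : r < ε.toReal := (ENNReal.ofReal_lt_iff_lt_toReal hr hεtop.ne).mp hε
  have key : ∀ u u' : α → X, Measurable u → Measurable u' → (∀ t, dist (u t) (u' t) ≤ r) →
      m.map u B ≤ m.map u' (Metric.thickening ε.toReal B) + ε := by
    intro u u' hu hu' huu'
    rw [Measure.map_apply hu hB, Measure.map_apply hu' Metric.isOpen_thickening.measurableSet]
    refine (measure_mono fun t ht => ?_).trans le_self_add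
    exact Metric.mem_thickening_iff.2 ⟨u t, ht, (dist_comm (u' t) (u t) ▸ huu' t).trans_lt hrε⟩
  exact ⟨key g g' hg hg' hgg', key g' g hg' hg fun t => dist_comm (g t) (g' t) ▸ hgg' t⟩

lemma exists_measurable_dist_denseSeq_lt {X : Type*} [PseudoMetricSpace X] [SeparableSpace X]
    [Nonempty X] [MeasurableSpace X] [OpensMeasurableSpace X] {δ : ℝ} (hδ : 0 < δ) :
    ∃ q : X → ℕ, Measurable q ∧ ∀ x, dist x (denseSeq X (q x)) < δ := by
  classical
  have hcover : ∀ x, ∃ n, dist x (denseSeq X n) < δ :=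
    fun x => (denseRange_denseSeq X).exists_dist_lt x hδ
  exact ⟨fun x => Nat.find (hcover x), measurable_find hcover fun _ => measurableSet_ball,
    fun x => Nat.find_spec (hcover x)⟩

lemma exists_measurable_tracing {X : Type*} [MetricSpace X] [CompactSpace X] [Nonempty X]
    [MeasurableSpace X] [OpensMeasurableSpace X] {T : ℕ → X → X} (hT : ∀ n, Continuous (T n))
    {k : ℕ} {a b : ℕ → ℕ} {ε η : ℝ} (hη : 0 < η)
    (htrace : ∀ y : ℕ → X, ∃ z, ∀ i, i < k → ∀ n, a i ≤ n → n ≤ b i →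
      dist (T n z) (T n (y i)) ≤ ε) :
    ∃ W : (Fin k → X) → X, Measurable W ∧ ∀ x (i : Fin k) n, a i ≤ n → n ≤ b i →
      dist (T n (W x)) (T n (x i)) ≤ ε + η := by
  classical
  set B := Finset.univ.sup fun i : Fin k => b i
  obtain ⟨δ, hδ, hequi⟩ := Metric.uniformEquicontinuous_iff.mp
    (CompactSpace.uniformEquicontinuous_of_equicontinuous
      (equicontinuous_finite.mpr fun n : Fin (B + 1) => hT n)) η hη
  obtain ⟨q, hq, hqδ⟩ := exists_measurable_dist_denseSeq_lt (X := X) hδ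
  set e := denseSeq X
  choose Z hZ using fun v : Fin k → ℕ => htrace fun j => if h : j < k then e (v ⟨j, h⟩) else e 0
  refine ⟨fun x => Z fun j => q (x j),
    (measurable_of_countable Z).comp
      (measurable_pi_lambda _ fun j => hq.comp (measurable_pi_apply j)),
    fun x i n hai hbi => ?_⟩
  have hnB : n < B + 1 :=
    Nat.lt_succ_of_le (hbi.trans (Finset.le_sup (f := fun i : Fin k => b i) (Finset.mem_univ i)))
  have hround : dist (T n (e (q (x i)))) (T n (x i)) ≤ η :=
    (hequi _ _ (by rw [dist_comm]; exact hqδ (x i)) ⟨n, hnB⟩).le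
  have hshadow := hZ (fun j => q (x j)) i i.isLt n hai hbi
  rw [dif_pos i.isLt] at hshadow
  exact (dist_triangle _ _ _).trans (add_le_add hshadow hround)

lemma toMeasure_nacomp_inducedMap {X : Type*} [MetricSpace X] [MeasurableSpace X]
    [BorelSpace X] {f : ℕ → X → X} (hf : ∀ n, Continuous (f n))
    (μ : LevyProkhorov (ProbabilityMeasure X)) (n : ℕ) :
    ((nacomp (fun n => inducedMap (f n) (hf n)) n μ).toMeasure : Measure X) =
      (μ.toMeasure : Measure X).map (nacomp f n) := by
  induction n with
  | zero => simp [nacomp]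
  | succ n ih =>
    change (((nacomp (fun n => inducedMap (f n) (hf n)) n μ).toMeasure.map
      (hf n).measurable.aemeasurable :
      ProbabilityMeasure X) : Measure X) = _
    rw [ProbabilityMeasure.toMeasure_map, ih,
      Measure.map_map (hf n).measurable (continuous_nacomp hf n).measurable]
    rfl

/-- If `(X, f_{0,∞})` has the specification property, then so does the induced system
`(𝓜(X), f̂_{0,∞})`. -/
theorem induced_specification_of_specification
    {X : Type*} [MetricSpace X] [CompactSpace X] [MeasurableSpace X] [BorelSpace X]
    (f : ℕ → X → X) (hf : ∀ n, Continuous (f n)) (h : NASpecification f) :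
    NASpecification (fun n => inducedMap (f n) (hf n)) := by
  intro ε hε
  obtain ⟨M, hM1, hM⟩ := h (ε / 2) (half_pos hε)
  refine ⟨M, hM1, fun k hk y a b hab hgap => ?_⟩
  have : Nonempty X := (y 0).toMeasure.nonempty
  obtain ⟨W, hW, hWtrace⟩ := exists_measurable_tracing (continuous_nacomp hf) (half_pos hε)
    fun y => hM k hk y a b hab hgap
  set μ : Fin k → Measure X := fun i => (y i).toMeasure
  let ν : ProbabilityMeasure X :=
    ⟨(Measure.pi μ).map W, Measure.isProbabilityMeasure_map hW.aemeasurable⟩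
  refine ⟨.ofMeasure ν, fun i hi n hai hbi => ?_⟩
  have hTn := (continuous_nacomp hf n).measurable
  have hmarginal : μ ⟨i, hi⟩ = (Measure.pi μ).map (Function.eval ⟨i, hi⟩) :=
    ((measurePreserving_eval μ ⟨i, hi⟩).map_eq).symm
  rw [LevyProkhorov.dist_probabilityMeasure_def, levyProkhorovDist,
    toMeasure_nacomp_inducedMap, toMeasure_nacomp_inducedMap]
  refine ENNReal.toReal_le_of_le_ofReal hε.le ?_
  change levyProkhorovEDist (((Measure.pi μ).map W).map _) ((μ ⟨i, hi⟩).map _) ≤ _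
  rw [hmarginal, Measure.map_map hTn hW, Measure.map_map hTn (measurable_pi_apply _)]
  exact levyProkhorovEDist_map_le_of_dist_le _ (hTn.comp hW) (hTn.comp (measurable_pi_apply _))
    hε.le fun x => (hWtrace x ⟨i, hi⟩ n hai hbi).trans (add_halves ε).le
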